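/- arXiv:2305.06986 — 2 statements merged into one kernel-verified Lean document; each statement's English description precedes it below -/
import Mathlib

section
/- For f : [-1,1] → ℝ twice continuously differentiable and x ∈ [-1,1], the identity ∫_0^1 [f''(-b)·ReLU(x+b) + f''(b)·ReLU(-x+b)] db = f(x) + c₁ + c₂x holds, where c₁ = f(0) - f(1) - f(-1) + f'(1) - f'(-1) and c₂ = f'(0) - f'(1) - f'(-1). -/
open MeasureTheory intervalIntegral

/-!
After the reflection `y ↦ -y` in its first summand, each half of the integrand has the form
`g''(y) · max (y - t) 0` on `[0, 1]`, with `(g, t) = (f ∘ neg, -x)` and `(f, x)`. The kernel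
vanishes for `y ≤ t` and equals `y - t` above it, so one integration by parts evaluates each half
as `g'(1)(1 - t) - g(1) + g(max t 0) + g'(0) · min t 0`; the two values add up to the claim.
-/

theorem deriv_deriv_comp_neg (g : ℝ → ℝ) (y : ℝ) :
    deriv (deriv fun z ↦ g (-z)) y = deriv (deriv g) (-y) := by
  have hneg : (deriv fun z ↦ g (-z)) = -fun z ↦ deriv g (-z) := funext fun z ↦ deriv_comp_neg g z
  rw [hneg, deriv.neg, deriv_comp_neg, neg_neg]

section TruncatedKernel

variable {g : ℝ → ℝ}

theorem integral_deriv_deriv_mul_sub (hg : ContDiff ℝ 2 g) (t a b : ℝ) :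
    ∫ y in a..b, deriv (deriv g) y * (y - t)
      = deriv g b * (b - t) - deriv g a * (a - t) - (g b - g a) := by
  have hg' : ContDiff ℝ 1 (deriv g) := hg.deriv' (n := 1)
  have hparts := integral_deriv_mul_eq_sub
    (u := deriv g) (v := fun y ↦ y - t) (u' := deriv (deriv g)) (v' := fun _ ↦ 1)
    (fun y _ ↦ (hg'.differentiable one_ne_zero y).hasDerivAt)
    (fun y _ ↦ (hasDerivAt_id y).sub_const t)
    (hg'.continuous_deriv_one.intervalIntegrable a b) intervalIntegrable_const
  have hftc : ∫ y in a..b, deriv g y = g b - g a :=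
    integral_deriv_eq_sub (fun y _ ↦ hg.differentiable two_ne_zero y)
      (hg'.continuous.intervalIntegrable a b)
  have hint : IntervalIntegrable (fun y ↦ deriv (deriv g) y * (y - t)) volume a b :=
    (hg'.continuous_deriv_one.mul (continuous_sub_right t)).intervalIntegrable a b
  simp only [mul_one] at hparts
  rw [integral_add hint (hg'.continuous.intervalIntegrable a b), hftc] at hparts
  linarith

theorem continuous_deriv_deriv_mul_max_sub (hg : ContDiff ℝ 2 g) (t : ℝ) :
    Continuous fun y ↦ deriv (deriv g) y * max (y - t) 0 :=
  (hg.deriv' (n := 1)).continuous_deriv_one.mul ((continuous_sub_right t).max continuous_const)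

theorem integral_deriv_deriv_mul_max_sub_of_le (hg : ContDiff ℝ 2 g) {t a b : ℝ}
    (hta : t ≤ a) (hab : a ≤ b) :
    ∫ y in a..b, deriv (deriv g) y * max (y - t) 0
      = deriv g b * (b - t) - deriv g a * (a - t) - (g b - g a) := by
  rw [← integral_deriv_deriv_mul_sub hg]
  refine integral_congr fun y hy ↦ ?_
  rw [Set.uIcc_of_le hab] at hy
  simp only [max_eq_left (sub_nonneg.2 (hta.trans hy.1))]

theorem integral_deriv_deriv_mul_max_sub_of_mem_Icc (hg : ContDiff ℝ 2 g) {t a b : ℝ}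
    (ht : t ∈ Set.Icc a b) :
    ∫ y in a..b, deriv (deriv g) y * max (y - t) 0 = deriv g b * (b - t) - (g b - g t) := by
  have hcont := continuous_deriv_deriv_mul_max_sub hg t
  have hvanish : ∫ y in a..t, deriv (deriv g) y * max (y - t) 0 = 0 := by
    refine (integral_congr fun y hy ↦ ?_).trans integral_zero
    rw [Set.uIcc_of_le ht.1] at hy
    simp only [max_eq_right (sub_nonpos.2 hy.2), mul_zero]
  rw [← integral_add_adjacent_intervals (hcont.intervalIntegrable a t)
    (hcont.intervalIntegrable t b), hvanish, integral_deriv_deriv_mul_max_sub_of_le hg le_rfl ht.2]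
  ring

end TruncatedKernel

/-- For `f` twice continuously differentiable and `x ∈ [-1,1]`,
`∫_0^1 [f''(-b)·ReLU(x+b) + f''(b)·ReLU(-x+b)] db = f(x) + c₁ + c₂·x` where
`c₁ = f(0) - f(1) - f(-1) + f'(1) - f'(-1)` and `c₂ = f'(0) - f'(1) - f'(-1)`. -/
theorem stmt3 (f : ℝ → ℝ) (hf : ContDiff ℝ 2 f) (x : ℝ) (hx : x ∈ Set.Icc (-1 : ℝ) 1) :
    (∫ b in (0 : ℝ)..1,
        (deriv (deriv f) (-b) * max (x + b) 0 + deriv (deriv f) b * max (-x + b) 0))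
      = f x + (f 0 - f 1 - f (-1) + deriv f 1 - deriv f (-1))
          + (deriv f 0 - deriv f 1 - deriv f (-1)) * x := by
  have hf' : ContDiff ℝ 2 fun y ↦ f (-y) := hf.comp contDiff_neg
  have hsplit : (∫ b in (0 : ℝ)..1,
        (deriv (deriv f) (-b) * max (x + b) 0 + deriv (deriv f) b * max (-x + b) 0))
      = (∫ b in (0 : ℝ)..1, deriv (deriv fun y ↦ f (-y)) b * max (b - -x) 0)
        + ∫ b in (0 : ℝ)..1, deriv (deriv f) b * max (b - x) 0 := by
    rw [← integral_add ((continuous_deriv_deriv_mul_max_sub hf' _).intervalIntegrable 0 1)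
      ((continuous_deriv_deriv_mul_max_sub hf x).intervalIntegrable 0 1)]
    refine integral_congr fun b _ ↦ ?_
    simp only [deriv_deriv_comp_neg, sub_neg_eq_add, add_comm b, neg_add_eq_sub]
  obtain ⟨hx₁, hx₂⟩ := hx
  rcases le_total 0 x with hx₀ | hx₀
  · rw [hsplit, integral_deriv_deriv_mul_max_sub_of_le hf' (neg_nonpos.2 hx₀) zero_le_one,
      integral_deriv_deriv_mul_max_sub_of_mem_Icc hf ⟨hx₀, hx₂⟩]
    simp only [deriv_comp_neg, neg_zero]
    ring
  · rw [hsplit, integral_deriv_deriv_mul_max_sub_of_mem_Icc hf' ⟨neg_nonneg.2 hx₀, neg_le.1 hx₁⟩,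
      integral_deriv_deriv_mul_max_sub_of_le hf hx₀ zero_le_one]
    simp only [deriv_comp_neg, neg_neg]
    ring
end

section
/- With the notation of the previous items, the following integration-by-parts identity holds: A_{2k}^{(d)} = (Z_d/(d-1))·G_{2k}^{(d)}(0) + (2k(2k+d-2)/(d-1)²)·(Z_d/Z_{d+2})·B_{2k-1}^{(d+2)}, using the derivative formula (d/dx)G_k^{(d)}(x) = (k(k+d-2)/(d-1))·G_{k-1}^{(d+2)}(x). -/
/-!
Since `d/dx (1 - x²)^((d-1)/2) = -(d-1) x (1 - x²)^((d-3)/2)`, integrating by parts on `[0, 1]`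
turns `A_{2k}^{(d)}` into the boundary value at `0` (the one at `1` vanishes since `(d-1)/2 > 0`)
plus the integral of `G_{2k}^{(d)}'` against the weight of dimension `d + 2`. The derivative
formula `(d-1) G_{n+1}^{(d)}' = (n+1)(n+d-1) G_n^{(d+2)}` follows by induction from the three-term
recurrence, once one knows the connection formula expressing `G_{n+2}^{(d)}` through
`G_{n+2}^{(d+2)}` and `G_n^{(d+2)}`, itself proved by the same induction.
-/

open scoped Nat
open MeasureTheory

noncomputable def geg (d : ℕ) : ℕ → ℝ → ℝ
  | 0, _ => 1
  | 1, x => x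
  | (k + 2), x =>
      (((d : ℝ) + 2 * (k + 2) - 4) / ((d : ℝ) + (k + 2) - 3)) * x * geg d (k + 1) x
        - (((k : ℝ) + 1) / ((d : ℝ) + (k + 2) - 3)) * geg d k x

noncomputable def Zc (d : ℕ) : ℝ :=
  Real.Gamma ((d : ℝ) / 2) / (Real.sqrt Real.pi * Real.Gamma (((d : ℝ) - 1) / 2))

noncomputable def Ageg (d k : ℕ) : ℝ :=
  ∫ x in (0:ℝ)..1, x * geg d (2 * k) x * (Zc d * (1 - x ^ 2) ^ (((d : ℝ) - 3) / 2))

noncomputable def Bgeg (d k : ℕ) : ℝ :=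
  ∫ x in (0:ℝ)..1, geg d (2 * k + 1) x * (Zc d * (1 - x ^ 2) ^ (((d : ℝ) - 3) / 2))

section Gegenbauer

variable {d : ℕ}

@[simp] lemma geg_zero (x : ℝ) : geg d 0 x = 1 := rfl
@[simp] lemma geg_one (x : ℝ) : geg d 1 x = x := rfl

lemma mul_geg_add_two (hd : 2 ≤ d) (k : ℕ) (x : ℝ) :
    ((d : ℝ) + k - 1) * geg d (k + 2) x
      = ((d : ℝ) + 2 * k) * x * geg d (k + 1) x - ((k : ℝ) + 1) * geg d k x := by
  have hd' : (2 : ℝ) ≤ d := by exact_mod_cast hd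
  have hne : (d : ℝ) + (k + 2) - 3 ≠ 0 := by linarith [k.cast_nonneg (α := ℝ)]
  rw [geg]
  field_simp
  ring

lemma mul_geg_two (hd : 2 ≤ d) (x : ℝ) : ((d : ℝ) - 1) * geg d 2 x = d * x ^ 2 - 1 := by
  have h2 := mul_geg_add_two hd 0 x
  norm_num at h2
  linear_combination h2

lemma mul_geg_three (hd : 2 ≤ d) (x : ℝ) :
    ((d : ℝ) - 1) * geg d 3 x = (d + 2) * x ^ 3 - 3 * x := by
  have hd0 : (d : ℝ) ≠ 0 := Nat.cast_ne_zero.mpr (by omega)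
  have h3 := mul_geg_add_two hd 1 x
  norm_num at h3
  apply mul_left_cancel₀ hd0
  linear_combination (d - 1 : ℝ) * h3 + (d + 2) * x * mul_geg_two hd x

lemma geg_connection (hd : 2 ≤ d) (n : ℕ) (x : ℝ) :
    ((d : ℝ) - 1) * (2 * n + d + 2) * geg d (n + 2) x
      = ((n : ℝ) + d + 1) * (n + d) * geg (d + 2) (n + 2) x
        - ((n : ℝ) + 2) * (n + 1) * geg (d + 2) n x := by
  have hd' : (2 : ℝ) ≤ d := by exact_mod_cast hd
  have hd2 : 2 ≤ d + 2 := by omega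
  induction n using Nat.twoStepInduction with
  | zero =>
    have h := mul_geg_two hd2 x
    push_cast [geg_zero] at h ⊢
    linear_combination (d + 2 : ℝ) * mul_geg_two hd x - d * h
  | one =>
    have h3 := mul_geg_three hd2 x
    push_cast [geg_one] at h3 ⊢
    linear_combination (d + 4 : ℝ) * mul_geg_three hd x - (d + 2) * h3
  | more n ih0 ih1 =>
    have hne : ((d : ℝ) + n + 1) * (d + 2 * n + 2) ≠ 0 := by positivity
    have R1 := mul_geg_add_two hd (n + 2) x
    have R2 := mul_geg_add_two hd2 (n + 2) x
    have R3 := mul_geg_add_two hd2 n x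
    apply mul_left_cancel₀ hne
    push_cast at ih0 ih1 R1 R2 R3 ⊢
    linear_combination
      ((d + 2 * n + 6) * (d + 2 * n + 2) * x : ℝ) * ih1
      - ((d + 2 * n + 6) * (n + 3) : ℝ) * ih0
      + ((d - 1) * (d + 2 * n + 6) * (d + 2 * n + 2) : ℝ) * R1
      - ((n + d + 2) * (d + n + 1) * (d + 2 * n + 2) : ℝ) * R2
      + ((d + 2 * n + 6) * (n + 3) * (n + 2) : ℝ) * R3

lemma hasDerivAt_geg_succ (hd : 2 ≤ d) (n : ℕ) (x : ℝ) :
    HasDerivAt (geg d (n + 1)) (((n : ℝ) + 1) * (n + d - 1) / (d - 1) * geg (d + 2) n x) x := by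
  have hd' : (2 : ℝ) ≤ d := by exact_mod_cast hd
  have hd1 : (d : ℝ) - 1 ≠ 0 := by linarith
  induction n using Nat.twoStepInduction with
  | zero =>
    refine (hasDerivAt_id' x).congr_deriv ?_
    field_simp
    simp
  | one =>
    have h : geg d 2 = fun y : ℝ => (d * y ^ 2 - 1) / (d - 1) := by
      funext y
      rw [eq_div_iff hd1, mul_comm, mul_geg_two hd]
    rw [h]
    refine ((((hasDerivAt_pow 2 x).const_mul (d : ℝ)).sub_const 1).div_const _).congr_deriv ?_
    push_cast [geg_one]
    field_simp
    ring
  | more n ih0 ih1 =>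
    have hdn : (d : ℝ) + n ≠ 0 := by positivity
    have h : geg d (n + 2 + 1) = fun y =>
        ((d + 2 * n + 2) * (y * geg d (n + 2) y) - (n + 2) * geg d (n + 1) y) / (d + n) := by
      funext y
      have R := mul_geg_add_two hd (n + 1) y
      push_cast at R
      rw [eq_div_iff hdn]
      linear_combination R
    rw [h]
    refine ((((hasDerivAt_id' x).mul ih1).const_mul ((d : ℝ) + 2 * n + 2)).sub
      (ih0.const_mul ((n : ℝ) + 2)) |>.div_const ((d : ℝ) + n)).congr_deriv ?_
    have E := geg_connection hd n x
    have R := mul_geg_add_two (d := d + 2) (by omega) n x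
    push_cast at E R ⊢
    field_simp
    linear_combination E - ((n : ℝ) + 2) * (n + d) * R

lemma continuous_geg (hd : 2 ≤ d) : ∀ n, Continuous (geg d n)
  | 0 => continuous_const
  | n + 1 => continuous_iff_continuousAt.mpr fun x => (hasDerivAt_geg_succ hd n x).continuousAt

lemma Zc_pos (hd : 2 ≤ d) : 0 < Zc d := by
  have hd' : (2 : ℝ) ≤ d := by exact_mod_cast hd
  unfold Zc
  have := Real.Gamma_pos_of_pos (by linarith : (0 : ℝ) < d / 2)
  have := Real.Gamma_pos_of_pos (by linarith : (0 : ℝ) < (d - 1) / 2)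
  positivity

end Gegenbauer

open Set intervalIntegral

lemma hasDerivAt_one_sub_sq_rpow {p x : ℝ} (hx : x ∈ Ioo (-1) 1) :
    HasDerivAt (fun y => (1 - y ^ 2) ^ p) (-(2 * p) * x * (1 - x ^ 2) ^ (p - 1)) x := by
  have hpos : 0 < 1 - x ^ 2 := by nlinarith [hx.1, hx.2]
  convert ((hasDerivAt_pow 2 x).const_sub 1).rpow_const (p := p) (Or.inl hpos.ne') using 1
  push_cast
  ring

lemma integral_mul_mul_one_sub_sq_rpow {g g' : ℝ → ℝ} {p : ℝ} (hp : 0 < p)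
    (hg : ContinuousOn g (Icc 0 1)) (hgg' : ∀ x ∈ Ioo 0 1, HasDerivAt g (g' x) x)
    (hg' : IntervalIntegrable g' volume 0 1) :
    ∫ x in (0 : ℝ)..1, x * g x * (1 - x ^ 2) ^ (p - 1)
      = (g 0 + ∫ x in (0 : ℝ)..1, g' x * (1 - x ^ 2) ^ p) / (2 * p) := by
  set v : ℝ → ℝ := fun x => -(1 - x ^ 2) ^ p / (2 * p)
  have hv : ContinuousOn v (uIcc 0 1) :=
    ((continuous_const.sub (continuous_pow 2)).rpow_const fun _ => Or.inr hp.le).neg.div_const _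
      |>.continuousOn
  have hvv' : ∀ x ∈ Ioo (0 : ℝ) 1, HasDerivAt v (x * (1 - x ^ 2) ^ (p - 1)) x := fun x hx =>
    ((hasDerivAt_one_sub_sq_rpow ⟨by linarith [hx.1], hx.2⟩).neg.div_const (2 * p)).congr_deriv
      (by field_simp)
  have hv'_nonneg : ∀ x ∈ Ioo (0 : ℝ) 1, 0 ≤ x * (1 - x ^ 2) ^ (p - 1) := fun x hx =>
    mul_nonneg hx.1.le (Real.rpow_nonneg (by nlinarith [hx.1, hx.2]) _)
  have hv' : IntervalIntegrable (fun x => x * (1 - x ^ 2) ^ (p - 1)) volume 0 1 :=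
    intervalIntegrable_deriv_of_nonneg hv (by simpa using hvv') (by simpa using hv'_nonneg)
  have ibp := integral_mul_deriv_eq_deriv_mul_of_hasDerivAt (by simpa using hg) hv
    (by simpa using hgg') (by simpa using hvv') hg' hv'
  have hv0 : v 0 = -1 / (2 * p) := by simp [v]
  have hv1 : v 1 = 0 := by simp [v, Real.zero_rpow hp.ne']
  have hlhs : ∫ x in (0 : ℝ)..1, x * g x * (1 - x ^ 2) ^ (p - 1)
      = ∫ x in (0 : ℝ)..1, g x * (x * (1 - x ^ 2) ^ (p - 1)) :=
    integral_congr fun x _ => by ring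
  have hrhs : ∫ x in (0 : ℝ)..1, g' x * v x
      = -(∫ x in (0 : ℝ)..1, g' x * (1 - x ^ 2) ^ p) / (2 * p) := by
    rw [← intervalIntegral.integral_neg, ← intervalIntegral.integral_div]
    exact integral_congr fun x _ => by simp only [v]; ring
  rw [hlhs, ibp, hv0, hv1, hrhs]
  ring

-- `B_{2k-1}^{(d+2)}` is `Bgeg (d + 2) (k - 1)`.
/-- the integration-by-parts identity
`A_{2k}^{(d)} = (Z_d/(d-1))·G_{2k}^{(d)}(0) + (2k(2k+d-2)/(d-1)²)·(Z_d/Z_{d+2})·B_{2k-1}^{(d+2)}`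
for `k ≥ 1` (here `B_{2k-1}^{(d+2)} = Bgeg (d+2) (k-1)` since `2k-1 = 2(k-1)+1`). -/
theorem stmt13 (d : ℕ) (hd : 2 ≤ d) (k : ℕ) (hk : 1 ≤ k) :
    Ageg d k
      = Zc d / ((d : ℝ) - 1) * geg d (2 * k) 0
        + (2 * k * (2 * k + (d : ℝ) - 2) / ((d : ℝ) - 1) ^ 2) * (Zc d / Zc (d + 2))
            * Bgeg (d + 2) (k - 1) := by
  have hd' : (2 : ℝ) ≤ d := by exact_mod_cast hd
  set n := 2 * k - 1
  have hn : 2 * k = n + 1 := by omega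
  set c : ℝ := ((n : ℝ) + 1) * (n + d - 1) / (d - 1)
  have ibp := integral_mul_mul_one_sub_sq_rpow (g := geg d (n + 1)) (p := ((d : ℝ) - 1) / 2)
    (by linarith) (continuous_geg hd _).continuousOn (fun x _ => hasDerivAt_geg_succ hd n x)
    ((continuous_const.mul (continuous_geg (d := d + 2) (by omega) n)).intervalIntegrable 0 1)
  have hA : Ageg d k = Zc d * ∫ x in (0 : ℝ)..1,
      x * geg d (n + 1) x * (1 - x ^ 2) ^ (((d : ℝ) - 1) / 2 - 1) := by
    rw [Ageg, hn, ← intervalIntegral.integral_const_mul]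
    refine intervalIntegral.integral_congr fun x _ => ?_
    rw [show ((d : ℝ) - 1) / 2 - 1 = (d - 3) / 2 by ring]
    ring
  have hB : Bgeg (d + 2) (k - 1) = Zc (d + 2) * ∫ x in (0 : ℝ)..1,
      geg (d + 2) n x * (1 - x ^ 2) ^ (((d : ℝ) - 1) / 2) := by
    rw [Bgeg, show 2 * (k - 1) + 1 = n by omega, ← intervalIntegral.integral_const_mul]
    refine intervalIntegral.integral_congr fun x _ => ?_
    rw [show (((d + 2 : ℕ) : ℝ) - 3) / 2 = (d - 1) / 2 by push_cast; ring]
    ring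
  have hc : ∫ x in (0 : ℝ)..1, c * geg (d + 2) n x * (1 - x ^ 2) ^ (((d : ℝ) - 1) / 2)
      = c * ∫ x in (0 : ℝ)..1, geg (d + 2) n x * (1 - x ^ 2) ^ (((d : ℝ) - 1) / 2) := by
    simp only [mul_assoc, intervalIntegral.integral_const_mul]
  have hZ := (Zc_pos (d := d + 2) (by omega)).ne'
  have hd1 : (d : ℝ) - 1 ≠ 0 := by linarith
  have hkn : (2 * k : ℝ) = n + 1 := by exact_mod_cast hn
  rw [hA, hB, ibp, hc, hn, hkn]
  simp only [c]
  field_simp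
  ring
end
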